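/- arXiv:2211.15392 — 7 statements merged into one kernel-verified Lean document; each statement's English description precedes it below -/
import Mathlib

section
/- For all natural numbers n, \sum_{k=0}^n \frac{(2n-k)!}{(n-k)!(n-k)!k!} = \sum_{k=0}^n \binom{n}{k}^2 2^k. -/
/-!
After the substitution `k ↦ n - k` the `k`-th term on the left is `C(n+k, k) * C(n, k)`.
Vandermonde's identity gives `C(n+k, k) = ∑ᵢ C(n, i) * C(k, i)`; after exchanging the sums, the
inner sum `∑ₖ C(n, k) * C(k, i) = C(n, i) * 2 ^ (n - i)` counts pairs of nested subsets
`i`-set ⊆ `k`-set ⊆ `[n]`, and the substitution `i ↦ n - i` yields the right-hand side.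
-/

open Finset

namespace Nat

theorem sum_range_choose_mul_choose (n i : ℕ) :
    ∑ k ∈ range (n + 1), n.choose k * k.choose i = n.choose i * 2 ^ (n - i) := by
  rcases lt_or_ge n i with hni | hin
  · rw [choose_eq_zero_of_lt hni, zero_mul]
    exact sum_eq_zero fun k hk ↦ by
      rw [choose_eq_zero_of_lt ((mem_range_succ_iff.mp hk).trans_lt hni), mul_zero]
  obtain ⟨m, rfl⟩ := exists_add_of_le hin
  rw [add_assoc, sum_range_add, add_tsub_cancel_left, ← sum_range_choose, mul_sum]
  have below : ∑ k ∈ range i, (i + m).choose k * k.choose i = 0 :=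
    sum_eq_zero fun k hk ↦ by rw [choose_eq_zero_of_lt (mem_range.mp hk), mul_zero]
  rw [below, zero_add]
  refine sum_congr rfl fun j _ ↦ ?_
  rw [choose_mul (le_add_right i j), add_tsub_cancel_left, add_tsub_cancel_left]

theorem add_choose_eq_sum_range_choose_mul_choose {m n N : ℕ} (hn : n ≤ N) :
    (m + n).choose n = ∑ i ∈ range (N + 1), m.choose i * n.choose i := by
  rw [add_choose_eq, Finset.Nat.sum_antidiagonal_eq_sum_range_succ_mk]
  refine sum_subset_zero_on_sdiff (range_subset_range.mpr (by omega)) (fun i hi ↦ ?_)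
    (fun i hi ↦ ?_)
  · rw [choose_eq_zero_of_lt (n := n) (by grind), mul_zero]
  · rw [choose_symm (by grind)]

theorem sum_range_add_choose_mul_choose (n : ℕ) :
    ∑ k ∈ range (n + 1), (n + k).choose k * n.choose k
      = ∑ k ∈ range (n + 1), n.choose k ^ 2 * 2 ^ k := by
  calc ∑ k ∈ range (n + 1), (n + k).choose k * n.choose k
      = ∑ k ∈ range (n + 1), ∑ i ∈ range (n + 1), n.choose i * (n.choose k * k.choose i) := by
        refine sum_congr rfl fun k hk ↦ ?_
        rw [add_choose_eq_sum_range_choose_mul_choose (mem_range_succ_iff.mp hk), sum_mul]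
        exact sum_congr rfl fun i _ ↦ by ring
    _ = ∑ i ∈ range (n + 1), n.choose i ^ 2 * 2 ^ (n - i) := by
        rw [sum_comm]
        refine sum_congr rfl fun i _ ↦ ?_
        rw [← mul_sum, sum_range_choose_mul_choose]
        ring
    _ = ∑ k ∈ range (n + 1), n.choose k ^ 2 * 2 ^ k := by
        rw [← sum_range_reflect]
        refine sum_congr rfl fun k hk ↦ ?_
        have hk : k ≤ n := mem_range_succ_iff.mp hk
        rw [add_tsub_cancel_right, choose_symm hk, Nat.sub_sub_self hk]

theorem factorial_div_eq_add_choose_mul_choose {n k : ℕ} (hk : k ≤ n) :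
    ((n + k)! / (k ! * k ! * (n - k)!) : ℚ) = (n + k).choose k * n.choose k := by
  rw [cast_choose ℚ (le_add_left k n), cast_choose ℚ hk, add_tsub_cancel_right]
  field_simp

end Nat

/-- The two classical formulas for the central Delannoy number agree:
`∑_{k=0}^n (2n-k)!/((n-k)!(n-k)!k!) = ∑_{k=0}^n (n choose k)^2 2^k`. -/
theorem delannoy_formulas (n : ℕ) :
    ∑ k ∈ Finset.range (n + 1),
        ((Nat.factorial (2 * n - k) : ℚ) /
          ((Nat.factorial (n - k)) * (Nat.factorial (n - k)) * (Nat.factorial k)))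
      = ∑ k ∈ Finset.range (n + 1), ((n.choose k : ℚ)) ^ 2 * 2 ^ k := by
  rw [← sum_range_reflect]
  calc _ = ∑ k ∈ range (n + 1), (((n + k).choose k * n.choose k : ℕ) : ℚ) := by
        refine sum_congr rfl fun k hk ↦ ?_
        have hk : k ≤ n := mem_range_succ_iff.mp hk
        rw [add_tsub_cancel_right, Nat.sub_sub_self hk, show 2 * n - (n - k) = n + k by omega,
          Nat.cast_mul, ← Nat.factorial_div_eq_add_choose_mul_choose hk]
    _ = _ := by exact_mod_cast Nat.sum_range_add_choose_mul_choose n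
end

section
/- Let G = Aut(R,<) act diagonally on R^{(n)} \times R^{(m)}, where R^{(k)} denotes the set of strictly increasing k-tuples of reals. Then the orbits of this action are in bijection with (n,m)-Delannoy paths; in particular the number of orbits is D(n,m). -/
/-- A list of steps is an `(n,m)`-Delannoy path if each step is `(1,0)`, `(0,1)`, or `(1,1)`
and the steps sum to `(n,m)`. -/
def IsDelannoy (n m : ℕ) (p : List (ℕ × ℕ)) : Prop :=
  (∀ s ∈ p, s = (1, 0) ∨ s = (0, 1) ∨ s = (1, 1)) ∧ p.sum = (n, m)

/-- The Delannoy path obtained by merging the coordinates of `x` and `y`. -/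
noncomputable def mergePath {n m : ℕ} (x : Fin n → ℝ) (y : Fin m → ℝ) : List (ℕ × ℕ) := by
  classical
  exact ((Finset.image x Finset.univ ∪ Finset.image y Finset.univ).sort (· ≤ ·)).map
    fun t => ((if t ∈ Finset.image x Finset.univ then 1 else 0),
              (if t ∈ Finset.image y Finset.univ then 1 else 0))

/-- Points of `ℝ^{(n)} × ℝ^{(m)}`: pairs of strictly increasing tuples. -/
def IncPair (n m : ℕ) : Type :=
  {x : Fin n → ℝ // StrictMono x} × {y : Fin m → ℝ // StrictMono y}

/-- The diagonal orbit equivalence under the group `Aut(ℝ,<)` of order isomorphisms of ℝ. -/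
def SameOrbit {n m : ℕ} (p q : IncPair n m) : Prop :=
  ∃ g : ℝ ≃o ℝ, (∀ i, g (p.1.1 i) = q.1.1 i) ∧ (∀ j, g (p.2.1 j) = q.2.1 j)

/-! ### Auxiliary lemmas -/

section Aux

set_option linter.unreachableTactic false
set_option linter.unusedTactic false

lemma mergePath_def {n m : ℕ} (x : Fin n → ℝ) (y : Fin m → ℝ) :
    mergePath x y = ((Finset.image x Finset.univ ∪ Finset.image y Finset.univ).sort (· ≤ ·)).map
    fun t => ((if t ∈ Finset.image x Finset.univ then 1 else 0),
              (if t ∈ Finset.image y Finset.univ then 1 else 0)) := rfl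

lemma sortFilter (s t : Finset ℝ) (h : s ⊆ t) :
    (t.sort (· ≤ ·)).filter (fun a => decide (a ∈ s)) = s.sort (· ≤ ·) := by
  refine List.Perm.eq_of_pairwise' (r := (· ≤ ·)) ?_ ?_ ?_
  rotate_right
  · rw [← Multiset.coe_eq_coe, ← Multiset.filter_coe (fun a => a ∈ s), Finset.sort_eq,
      Finset.sort_eq, ← Finset.filter_val]
    congr 1
    ext a
    simp only [Finset.mem_filter]
    exact ⟨fun ha => ha.2, fun ha => ⟨h ha, ha⟩⟩
  · exact (Finset.pairwise_sort _ _).filter _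
  · exact Finset.pairwise_sort _ _

lemma sortImage {n : ℕ} (x : Fin n → ℝ) (hx : StrictMono x) :
    (Finset.image x Finset.univ).sort (· ≤ ·) = List.ofFn x := by
  refine List.Perm.eq_of_pairwise' (r := (· ≤ ·)) ?_ ?_ ?_
  rotate_right
  · rw [← Multiset.coe_eq_coe, Finset.sort_eq,
      Finset.image_val_of_injOn (hx.injective.injOn), List.ofFn_eq_map]
    rfl
  · exact Finset.pairwise_sort _ _
  · exact (List.sortedLE_ofFn_iff.2 hx.monotone).pairwise

lemma sortMap (g : ℝ → ℝ) (hg : StrictMono g) (s : Finset ℝ) :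
    (s.image g).sort (· ≤ ·) = (s.sort (· ≤ ·)).map g := by
  refine List.Perm.eq_of_pairwise' (r := (· ≤ ·)) ?_ ?_ ?_
  rotate_right
  · rw [← Multiset.coe_eq_coe, Finset.sort_eq, Finset.image_val_of_injOn hg.injective.injOn]
    change _ = Multiset.map g ↑(s.sort (· ≤ ·))
    rw [Finset.sort_eq]
  · exact Finset.pairwise_sort _ _
  · exact List.Pairwise.map g (fun _ _ h => hg.monotone h) (Finset.pairwise_sort s _)

lemma list_sum_prod (l : List (ℕ×ℕ)) :
    l.sum = ((l.map Prod.fst).sum, (l.map Prod.snd).sum) := by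
  induction l with
  | nil => rfl
  | cons a l ih => simp [ih, Prod.ext_iff]

lemma sort_map_sum (s : Finset ℝ) (f : ℝ → ℕ) :
    ((s.sort (· ≤ ·)).map f).sum = ∑ t ∈ s, f t := by
  rw [← Finset.sum_map_toList]
  exact List.Perm.sum_eq (((Finset.sort_perm_toList (s := s) (r := (· ≤ ·)))).map f)

lemma merge_delannoy {n m : ℕ} (x : Fin n → ℝ) (y : Fin m → ℝ)
    (hx : StrictMono x) (hy : StrictMono y) : IsDelannoy n m (mergePath x y) := by
  classical
  constructor
  · rw [mergePath_def]
    rintro s hs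
    simp only [List.mem_map] at hs
    obtain ⟨t, ht, rfl⟩ := hs
    rw [Finset.mem_sort, Finset.mem_union] at ht
    rcases ht with h | h
    · by_cases h2 : t ∈ Finset.image y Finset.univ <;> simp [h, h2]
    · by_cases h2 : t ∈ Finset.image x Finset.univ <;> simp [h, h2]
  · rw [mergePath_def, list_sum_prod, List.map_map, List.map_map]
    have c1 : ∀ (A B : Finset ℝ), ∑ t ∈ A ∪ B, (if t ∈ A then 1 else 0) = A.card := by
      intro A B
      rw [Finset.sum_ite_mem, Finset.union_inter_cancel_left, Finset.card_eq_sum_ones]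
    have e1 := sort_map_sum (Finset.image x Finset.univ ∪ Finset.image y Finset.univ)
      (fun t => if t ∈ Finset.image x Finset.univ then 1 else 0)
    have e2 := sort_map_sum (Finset.image x Finset.univ ∪ Finset.image y Finset.univ)
      (fun t => if t ∈ Finset.image y Finset.univ then 1 else 0)
    have e2' : ∑ t ∈ Finset.image x Finset.univ ∪ Finset.image y Finset.univ,
        (if t ∈ Finset.image y Finset.univ then 1 else 0)
          = (Finset.image y Finset.univ).card := by
      rw [Finset.union_comm]; exact c1 _ _
    simp only [Function.comp_def]
    rw [e1, e2, c1, e2', Finset.card_image_of_injective _ hx.injective,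
      Finset.card_image_of_injective _ hy.injective]
    simp

noncomputable def pieceFun (a a' b b' : ℝ) (t : ℝ) : ℝ :=
  if t ≤ a then t + (b - a)
  else if t ≤ a' then b + (t - a) * ((b' - b) / (a' - a))
  else t + (b' - a')

lemma core (a a' b b' : ℝ) (ha : a < a') (hb : b < b') :
    ∃ g : ℝ ≃o ℝ, (∀ t, t ≤ a → g t = t + (b - a)) ∧ g a' = b' ∧
      (∀ t, a' ≤ t → g t = t + (b' - a')) := by
  set s : ℝ := (b' - b) / (a' - a) with hs_def
  have hs : 0 < s := div_pos (by linarith) (by linarith)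
  have hsa : (a' - a) * s = b' - b := by
    rw [hs_def, mul_div_cancel₀ _ (sub_ne_zero_of_ne ha.ne')]
  have hmono : StrictMono (pieceFun a a' b b') := by
    intro u v huv
    unfold pieceFun
    rw [← hs_def]
    split_ifs with h1 h2 h3 h4 h5 <;>
      first
        | linarith
        | nlinarith [mul_pos (show (0:ℝ) < v - a by linarith) hs]
        | nlinarith [mul_pos (sub_pos.2 huv) hs]
        | nlinarith [mul_le_mul_of_nonneg_right (show u - a ≤ a' - a by linarith) hs.le]
        | nlinarith [mul_pos (show (0:ℝ) < u - a by linarith) hs]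
  have hsurj : Function.Surjective (pieceFun a a' b b') := by
    intro z
    rcases le_or_gt z b with h | h
    · refine ⟨z - b + a, ?_⟩
      unfold pieceFun
      rw [if_pos (by linarith)]; ring
    · rcases le_or_gt z b' with h2 | h2
      · refine ⟨a + (z - b) / s, ?_⟩
        unfold pieceFun
        rw [← hs_def, if_neg, if_pos]
        · field_simp; ring
        · rw [← sub_nonpos]
          have : (z - b) / s ≤ a' - a := by
            rw [div_le_iff₀ hs]; nlinarith
          linarith
        · have : 0 < (z - b) / s := div_pos (by linarith) hs
          linarith
      · refine ⟨z - b' + a', ?_⟩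
        unfold pieceFun
        rw [if_neg (by linarith), if_neg (by linarith)]; ring
  refine ⟨StrictMono.orderIsoOfSurjective _ hmono hsurj, ?_, ?_, ?_⟩
  · intro t ht
    show pieceFun a a' b b' t = _
    unfold pieceFun; rw [if_pos ht]
  · show pieceFun a a' b b' a' = _
    unfold pieceFun
    rw [if_neg (by linarith), if_pos le_rfl, ← hs_def]
    nlinarith
  · intro t ht
    show pieceFun a a' b b' t = _
    unfold pieceFun
    rcases eq_or_lt_of_le ht with rfl | ht'
    · rw [if_neg (by linarith), if_pos le_rfl, ← hs_def]; nlinarith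
    · rw [if_neg (by linarith), if_neg (by linarith)]

lemma exists_iso_succ (k : ℕ) : ∀ (a b : Fin (k+1) → ℝ), StrictMono a → StrictMono b →
    ∃ g : ℝ ≃o ℝ, (∀ i, g (a i) = b i) ∧
      ∀ t, a (Fin.last k) ≤ t → g t = t + (b (Fin.last k) - a (Fin.last k)) := by
  induction k with
  | zero =>
    intro a b _ _
    refine ⟨OrderIso.addRight (b (Fin.last 0) - a (Fin.last 0)), ?_, ?_⟩
    · intro i
      rw [show i = Fin.last 0 from Fin.ext (by omega)]
      simp [OrderIso.addRight]
    · intro t _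
      simp [OrderIso.addRight]
  | succ k ih =>
    intro a b ha hb
    set p : Fin (k+2) := (Fin.last k).castSucc with hp
    set ℓ : Fin (k+2) := Fin.last (k+1) with hl
    have hpl : p < ℓ := Fin.castSucc_lt_last _
    obtain ⟨g0, hg0, hg0t⟩ := ih (a ∘ Fin.castSucc) (b ∘ Fin.castSucc)
      (ha.comp Fin.strictMono_castSucc) (hb.comp Fin.strictMono_castSucc)
    obtain ⟨h, h1, h2, h3⟩ := core (b p) (a ℓ + (b p - a p)) (b p) (b ℓ)
      (by have := ha hpl; linarith) (hb hpl)
    refine ⟨g0.trans h, ?_, ?_⟩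
    · intro i
      induction i using Fin.lastCases with
      | last =>
        have e1 : g0 (a ℓ) = a ℓ + (b p - a p) := hg0t (a ℓ) (le_of_lt (ha hpl))
        show h (g0 (a ℓ)) = b ℓ
        rw [e1]; exact h2
      | cast j =>
        have e1 : g0 (a j.castSucc) = b j.castSucc := hg0 j
        have e2 : b j.castSucc ≤ b p :=
          hb.monotone (Fin.castSucc_le_castSucc_iff.2 (Fin.le_last j))
        simp only [OrderIso.trans_apply, e1]
        rw [h1 _ e2]; ring
    · intro t ht
      have e1 : g0 t = t + (b p - a p) := hg0t t (le_trans (le_of_lt (ha hpl)) ht)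
      simp only [OrderIso.trans_apply, e1]
      rw [h3 _ (by linarith)]; ring

lemma exists_iso (k : ℕ) (a b : Fin k → ℝ) (ha : StrictMono a) (hb : StrictMono b) :
    ∃ g : ℝ ≃o ℝ, ∀ i, g (a i) = b i := by
  cases k with
  | zero => exact ⟨OrderIso.refl ℝ, fun i => i.elim0⟩
  | succ k => obtain ⟨g, hg, -⟩ := exists_iso_succ k a b ha hb; exact ⟨g, hg⟩

lemma merge_eq_of_orbit {n m : ℕ} (p q : IncPair n m) (h : SameOrbit p q) :
    mergePath p.1.1 p.2.1 = mergePath q.1.1 q.2.1 := by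
  classical
  obtain ⟨g, h1, h2⟩ := h
  have hx : Finset.image q.1.1 Finset.univ = (Finset.image p.1.1 Finset.univ).image g := by
    rw [Finset.image_image]
    exact congrArg (fun f => Finset.image f Finset.univ) (funext h1).symm
  have hy : Finset.image q.2.1 Finset.univ = (Finset.image p.2.1 Finset.univ).image g := by
    rw [Finset.image_image]
    exact congrArg (fun f => Finset.image f Finset.univ) (funext h2).symm
  have hmem : ∀ (s : Finset ℝ) (t : ℝ), g t ∈ s.image g ↔ t ∈ s := by
    intro s t
    simp [Finset.mem_image, g.injective.eq_iff]
  rw [mergePath_def, mergePath_def, hx, hy, ← Finset.image_union,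
    sortMap g g.strictMono, List.map_map]
  apply List.map_congr_left
  intro t _
  simp only [Function.comp_apply, hmem]

lemma orbit_of_merge_eq {n m : ℕ} (p q : IncPair n m)
    (h : mergePath p.1.1 p.2.1 = mergePath q.1.1 q.2.1) : SameOrbit p q := by
  classical
  obtain ⟨⟨x, hx⟩, ⟨y, hy⟩⟩ := p
  obtain ⟨⟨x', hx'⟩, ⟨y', hy'⟩⟩ := q
  simp only [mergePath_def] at h
  set A := Finset.image x Finset.univ with hA
  set B := Finset.image y Finset.univ with hB
  set A' := Finset.image x' Finset.univ with hA'
  set B' := Finset.image y' Finset.univ with hB'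
  set u := (A ∪ B).sort (· ≤ ·) with hu
  set v := (A' ∪ B').sort (· ≤ ·) with hv
  set f : ℝ → ℕ × ℕ := fun t => ((if t ∈ A then 1 else 0), (if t ∈ B then 1 else 0)) with hf
  set f' : ℝ → ℕ × ℕ := fun t => ((if t ∈ A' then 1 else 0), (if t ∈ B' then 1 else 0)) with hf'
  have hlen : u.length = v.length := by
    have := congrArg List.length h
    simpa using this
  have hus : StrictMono u.get := (Finset.sortedLT_sort _).strictMono_get
  have hvs : StrictMono (fun i : Fin u.length => v.get (Fin.cast hlen i)) :=
    (Finset.sortedLT_sort _).strictMono_get.comp (fun _ _ hij => hij)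
  obtain ⟨g, hg⟩ := exists_iso u.length u.get _ hus hvs
  have hmapg : u.map g = v := by
    apply List.ext_get (by simpa using hlen)
    intro i hi1 hi2
    simp only [List.get_eq_getElem, List.getElem_map]
    exact hg ⟨i, by simpa using hi1⟩
  have hpt : ∀ t ∈ u, f t = f' (g t) := by
    have : u.map f = u.map (fun t => f' (g t)) := by
      rw [h, ← hmapg, List.map_map]; rfl
    exact fun t ht => (List.map_eq_map_iff.mp this) t ht
  have key : ∀ {k : ℕ} (w w' : Fin k → ℝ) (c : ℕ × ℕ → ℕ), StrictMono w → StrictMono w' →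
      Finset.image w Finset.univ ⊆ A ∪ B → Finset.image w' Finset.univ ⊆ A' ∪ B' →
      (∀ t, t ∈ Finset.image w Finset.univ ↔ c (f t) = 1) →
      (∀ t, t ∈ Finset.image w' Finset.univ ↔ c (f' t) = 1) →
      ∀ i, g (w i) = w' i := by
    intro k w w' c hw hw' hsub hsub' hc hc'
    have hofn : List.ofFn w = u.filter (fun t => decide (t ∈ Finset.image w Finset.univ)) := by
      rw [sortFilter _ _ hsub, sortImage w hw]
    have hofn' : List.ofFn w' = v.filter (fun t => decide (t ∈ Finset.image w' Finset.univ)) := by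
      rw [sortFilter _ _ hsub', sortImage w' hw']
    have hfilter : v.filter (fun t => decide (t ∈ Finset.image w' Finset.univ))
        = (u.filter (fun t => decide (t ∈ Finset.image w Finset.univ))).map g := by
      rw [← hmapg, List.filter_map]
      congr 1
      apply List.filter_congr
      intro t ht
      simp only [Function.comp_apply, decide_eq_decide]
      rw [hc' (g t), hc t, hpt t ht]
    have heq : List.ofFn w' = List.ofFn (g ∘ w) := by
      rw [hofn', hfilter, ← hofn, List.map_ofFn]
    exact fun i => (congrFun (List.ofFn_inj.mp heq) i).symm
  refine ⟨g, ?_, ?_⟩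
  · refine key x x' Prod.fst hx hx' ?_ ?_ ?_ ?_
    · rw [← hA]; exact Finset.subset_union_left
    · rw [← hA']; exact Finset.subset_union_left
    · intro t; rw [← hA, hf]; by_cases hmem : t ∈ A <;> simp [hmem]
    · intro t; rw [← hA', hf']; by_cases hmem : t ∈ A' <;> simp [hmem]
  · refine key y y' Prod.snd hy hy' ?_ ?_ ?_ ?_
    · rw [← hB]; exact Finset.subset_union_right
    · rw [← hB']; exact Finset.subset_union_right
    · intro t; rw [← hB, hf]; by_cases hmem : t ∈ B <;> simp [hmem]
    · intro t; rw [← hB', hf']; by_cases hmem : t ∈ B' <;> simp [hmem]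

lemma exists_incPair {n m : ℕ} (L : List (ℕ × ℕ)) (hL : IsDelannoy n m L) :
    ∃ p : IncPair n m, mergePath p.1.1 p.2.1 = L := by
  classical
  obtain ⟨hsteps, hsum⟩ := hL
  set k := L.length with hk
  have hval : ∀ i : Fin k, L[(i : ℕ)] = (1,0) ∨ L[(i : ℕ)] = (0,1) ∨ L[(i : ℕ)] = (1,1) :=
    fun i => hsteps _ (List.getElem_mem i.2)
  set A : Finset (Fin k) := Finset.univ.filter (fun i => (L[(i : ℕ)]).1 = 1) with hA
  set B : Finset (Fin k) := Finset.univ.filter (fun i => (L[(i : ℕ)]).2 = 1) with hB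
  have hsum' : ((L.map Prod.fst).sum, (L.map Prod.snd).sum) = (n, m) := by
    rw [← list_sum_prod]; exact hsum
  have hmapofn : ∀ (c : ℕ × ℕ → ℕ), L.map c = List.ofFn (fun i => c (L[(i : ℕ)])) := by
    intro c
    conv_lhs => rw [← List.ofFn_getElem (xs := L)]
    rw [List.map_ofFn]; rfl
  have hcard : ∀ (c : ℕ × ℕ → ℕ) (N : ℕ), (∀ i : Fin k, c (L[(i : ℕ)]) = 0 ∨ c (L[(i : ℕ)]) = 1) →
      (L.map c).sum = N →
      (Finset.univ.filter (fun i : Fin k => c (L[(i : ℕ)]) = 1)).card = N := by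
    intro c N hc01 hN
    rw [← hN, hmapofn c, List.sum_ofFn]
    rw [show ∑ i : Fin k, c (L[(i : ℕ)])
        = ∑ i : Fin k, (if i ∈ Finset.univ.filter (fun i : Fin k => c (L[(i : ℕ)]) = 1)
            then 1 else 0) from Finset.sum_congr rfl ?_]
    · rw [Finset.sum_ite_mem, Finset.univ_inter, Finset.card_eq_sum_ones]
    · intro i _
      simp only [Finset.mem_filter, Finset.mem_univ, true_and]
      rcases hc01 i with hv | hv <;> rw [hv] <;> simp
  have hcA : A.card = n := hcard Prod.fst n (fun i => by rcases hval i with hv | hv | hv <;> simp [hv]) (by have := congrArg Prod.fst hsum'; simpa using this)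
  have hcB : B.card = m := hcard Prod.snd m (fun i => by rcases hval i with hv | hv | hv <;> simp [hv]) (by have := congrArg Prod.snd hsum'; simpa using this)
  set c : Fin k → ℝ := fun i => ((i : ℕ) : ℝ) with hc
  have hcs : StrictMono c := fun i j hij => by
    simp only [hc]; exact_mod_cast hij
  set x : Fin n → ℝ := fun j => c (A.orderEmbOfFin hcA j) with hx
  set y : Fin m → ℝ := fun j => c (B.orderEmbOfFin hcB j) with hy
  have hxs : StrictMono x := hcs.comp (A.orderEmbOfFin hcA).strictMono
  have hys : StrictMono y := hcs.comp (B.orderEmbOfFin hcB).strictMono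
  have himg : ∀ (S : Finset (Fin k)) (N : ℕ) (hS : S.card = N),
      Finset.image (fun j => c (S.orderEmbOfFin hS j)) Finset.univ = Finset.image c S := by
    intro S N hS
    have : Finset.image (S.orderEmbOfFin hS) Finset.univ = S := by
      ext t
      simp only [Finset.mem_image, Finset.mem_univ, true_and]
      constructor
      · rintro ⟨j, rfl⟩; exact Finset.orderEmbOfFin_mem S hS j
      · intro ht
        have : t ∈ Set.range (S.orderEmbOfFin hS) := by
          rw [Finset.range_orderEmbOfFin]; exact ht
        obtain ⟨j, hj⟩ := this
        exact ⟨j, hj⟩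
    rw [show (fun j => c (S.orderEmbOfFin hS j)) = c ∘ (S.orderEmbOfFin hS) from rfl,
      ← Finset.image_image, this]
  have himgx : Finset.image x Finset.univ = Finset.image c A := himg A n hcA
  have himgy : Finset.image y Finset.univ = Finset.image c B := himg B m hcB
  have hunion : Finset.image x Finset.univ ∪ Finset.image y Finset.univ
      = Finset.image c Finset.univ := by
    rw [himgx, himgy, ← Finset.image_union]
    congr 1
    ext i
    simp only [Finset.mem_union, hA, hB, Finset.mem_filter, Finset.mem_univ, true_and]
    rcases hval i with hv | hv | hv <;> rw [hv] <;> simp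
  have hmemc : ∀ (S : Finset (Fin k)) (i : Fin k), c i ∈ Finset.image c S ↔ i ∈ S := by
    intro S i
    simp [Finset.mem_image, hcs.injective.eq_iff]
  refine ⟨⟨⟨x, hxs⟩, ⟨y, hys⟩⟩, ?_⟩
  rw [mergePath_def, hunion, sortImage c hcs, List.map_ofFn]
  conv_rhs => rw [← List.ofFn_getElem (xs := L)]
  rw [List.ofFn_inj]
  funext i
  simp only [Function.comp_apply, himgx, himgy, hmemc, hA, hB, Finset.mem_filter,
    Finset.mem_univ, true_and]
  rcases hval i with hv | hv | hv <;> rw [hv] <;> simp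

lemma sameOrbit_equivalence {n m : ℕ} : Equivalence (SameOrbit (n := n) (m := m)) := by
  constructor
  · intro p
    exact ⟨OrderIso.refl ℝ, fun i => rfl, fun j => rfl⟩
  · rintro p q ⟨g, h1, h2⟩
    exact ⟨g.symm, fun i => by rw [← h1 i, g.symm_apply_apply],
      fun j => by rw [← h2 j, g.symm_apply_apply]⟩
  · rintro p q r ⟨g, h1, h2⟩ ⟨g', h1', h2'⟩
    exact ⟨g.trans g', fun i => by simp [OrderIso.trans_apply, h1 i, h1' i],
      fun j => by simp [OrderIso.trans_apply, h2 j, h2' j]⟩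

end Aux

/-- The orbits of `Aut(ℝ,<)` on `ℝ^{(n)} × ℝ^{(m)}` are in bijection with `(n,m)`-Delannoy
paths, via the merge construction; in particular the number of orbits is the Delannoy
number `D(n,m)`. -/
theorem orbits_biject_delannoy (n m : ℕ) :
    (∀ p : IncPair n m, IsDelannoy n m (mergePath p.1.1 p.2.1)) ∧
    (∀ p q : IncPair n m,
      SameOrbit p q ↔ mergePath p.1.1 p.2.1 = mergePath q.1.1 q.2.1) ∧
    (∀ L : List (ℕ × ℕ), IsDelannoy n m L →
      ∃ p : IncPair n m, mergePath p.1.1 p.2.1 = L) ∧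
    Nat.card (Quot (SameOrbit (n := n) (m := m)))
      = Nat.card {L : List (ℕ × ℕ) // IsDelannoy n m L} := by
  refine ⟨fun p => merge_delannoy _ _ p.1.2 p.2.2,
    fun p q => ⟨merge_eq_of_orbit p q, orbit_of_merge_eq p q⟩,
    fun L hL => exists_incPair L hL, ?_⟩
  apply Nat.card_eq_of_bijective
    (Quot.lift (fun p : IncPair n m => (⟨mergePath p.1.1 p.2.1,
        merge_delannoy _ _ p.1.2 p.2.2⟩ : {L : List (ℕ × ℕ) // IsDelannoy n m L}))
      (fun p q h => Subtype.ext (merge_eq_of_orbit p q h)))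
  constructor
  · intro a b
    induction a using Quot.ind with | _ p =>
    induction b using Quot.ind with | _ q =>
    intro hab
    have : mergePath p.1.1 p.2.1 = mergePath q.1.1 q.2.1 := congrArg Subtype.val hab
    exact Quot.sound (orbit_of_merge_eq p q this)
  · rintro ⟨L, hL⟩
    obtain ⟨p, hp⟩ := exists_incPair L hL
    exact ⟨Quot.mk _ p, Subtype.ext hp⟩
end

section
/- Given three planar Delannoy paths p12 \in \Gamma(a_1,a_2), p23 \in \Gamma(a_2,a_3), p13 \in \Gamma(a_1,a_3), there is at most one three-dimensional Delannoy path q from (0,0,0) to (a_1,a_2,a_3) whose three coordinate-pair projections are p12, p23, p13 respectively. -/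
/-- A three-dimensional Delannoy path from `0` to `a`: a list of nonzero 0-1 vectors
in `ℕ³` summing to `a`. -/
def IsDelannoy3 (a : ℕ × ℕ × ℕ) (q : List (ℕ × ℕ × ℕ)) : Prop :=
  (∀ s ∈ q, (s.1 = 0 ∨ s.1 = 1) ∧ (s.2.1 = 0 ∨ s.2.1 = 1) ∧ (s.2.2 = 0 ∨ s.2.2 = 1) ∧
    s ≠ (0, 0, 0)) ∧ q.sum = a

/-- Projection of a path along a coordinate projection `f`: project each step and
delete the zero steps. -/
def projPath (f : ℕ × ℕ × ℕ → ℕ × ℕ) (q : List (ℕ × ℕ × ℕ)) : List (ℕ × ℕ) :=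
  (q.map f).filter fun s => s ≠ (0, 0)

set_option maxHeartbeats 2000000 in
lemma delannoy3_aux : ∀ (q q' : List (ℕ × ℕ × ℕ)),
    (∀ s ∈ q, (s.1 = 0 ∨ s.1 = 1) ∧ (s.2.1 = 0 ∨ s.2.1 = 1) ∧ (s.2.2 = 0 ∨ s.2.2 = 1) ∧
      s ≠ (0, 0, 0)) →
    (∀ s ∈ q', (s.1 = 0 ∨ s.1 = 1) ∧ (s.2.1 = 0 ∨ s.2.1 = 1) ∧ (s.2.2 = 0 ∨ s.2.2 = 1) ∧
      s ≠ (0, 0, 0)) →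
    projPath (fun s => (s.1, s.2.1)) q = projPath (fun s => (s.1, s.2.1)) q' →
    projPath (fun s => (s.2.1, s.2.2)) q = projPath (fun s => (s.2.1, s.2.2)) q' →
    projPath (fun s => (s.1, s.2.2)) q = projPath (fun s => (s.1, s.2.2)) q' →
    q = q' := by
  intro q
  induction q with
  | nil =>
    intro q' _ hq' h12 h23 h13
    cases q' with
    | nil => rfl
    | cons s' t' =>
      exfalso
      obtain ⟨x, y, z⟩ := s'
      obtain ⟨hx, hy, hz, hne⟩ := hq' _ List.mem_cons_self
      simp only at hx hy hz
      rcases hx with hx | hx <;> rcases hy with hy | hy <;> rcases hz with hz | hz <;>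
        subst hx <;> subst hy <;> subst hz <;>
        simp only [projPath, List.map_cons, List.filter_cons, List.map_nil,
          List.filter_nil] at h12 h23 h13 <;>
        norm_num at h12 h23 h13 hne <;>
        first
          | exact (List.cons_ne_nil _ _) h12
          | exact (List.cons_ne_nil _ _) h23
          | exact (List.cons_ne_nil _ _) h13
  | cons s t ih =>
    intro q' hq hq' h12 h23 h13
    cases q' with
    | nil =>
      exfalso
      obtain ⟨x, y, z⟩ := s
      obtain ⟨hx, hy, hz, hne⟩ := hq _ List.mem_cons_self
      simp only at hx hy hz
      rcases hx with hx | hx <;> rcases hy with hy | hy <;> rcases hz with hz | hz <;>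
        subst hx <;> subst hy <;> subst hz <;>
        simp only [projPath, List.map_cons, List.filter_cons, List.map_nil,
          List.filter_nil] at h12 h23 h13 <;>
        norm_num at h12 h23 h13 hne <;>
        first
          | exact (List.cons_ne_nil _ _) h12
          | exact (List.cons_ne_nil _ _) h23
          | exact (List.cons_ne_nil _ _) h13
    | cons s' t' =>
      obtain ⟨x, y, z⟩ := s
      obtain ⟨x', y', z'⟩ := s'
      obtain ⟨hx, hy, hz, hne⟩ := hq _ List.mem_cons_self
      obtain ⟨hx', hy', hz', hne'⟩ := hq' _ List.mem_cons_self
      simp only at hx hy hz hx' hy' hz'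
      have ht : ∀ s ∈ t, (s.1 = 0 ∨ s.1 = 1) ∧ (s.2.1 = 0 ∨ s.2.1 = 1) ∧
          (s.2.2 = 0 ∨ s.2.2 = 1) ∧ s ≠ (0, 0, 0) :=
        fun s hs => hq s (List.mem_cons_of_mem _ hs)
      have ht' : ∀ s ∈ t', (s.1 = 0 ∨ s.1 = 1) ∧ (s.2.1 = 0 ∨ s.2.1 = 1) ∧
          (s.2.2 = 0 ∨ s.2.2 = 1) ∧ s ≠ (0, 0, 0) :=
        fun s hs => hq' s (List.mem_cons_of_mem _ hs)
      rcases hx with hx | hx <;> rcases hy with hy | hy <;> rcases hz with hz | hz <;>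
        rcases hx' with hx' | hx' <;> rcases hy' with hy' | hy' <;> rcases hz' with hz' | hz' <;>
        subst hx <;> subst hy <;> subst hz <;> subst hx' <;> subst hy' <;> subst hz' <;>
        simp only [projPath, List.map_cons, List.filter_cons] at h12 h23 h13 <;>
        simp at h12 h23 h13 hne hne' <;>
        first
        | (refine congrArg (List.cons _) (ih t' ht ht' ?_ ?_ ?_) <;>
            first
              | simpa [projPath] using h12
              | simpa [projPath] using h23
              | simpa [projPath] using h13)
        | exact absurd h12.1 (by decide)
        | exact absurd h23.1 (by decide)
        | exact absurd h13.1 (by decide)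
        | skip

/-- There is at most one three-dimensional Delannoy path from `(0,0,0)` to `(a₁,a₂,a₃)`
with prescribed projections onto the three coordinate planes. -/
theorem delannoy3_unique_lift (a₁ a₂ a₃ : ℕ) (q q' : List (ℕ × ℕ × ℕ))
    (hq : IsDelannoy3 (a₁, a₂, a₃) q) (hq' : IsDelannoy3 (a₁, a₂, a₃) q')
    (h12 : projPath (fun s => (s.1, s.2.1)) q = projPath (fun s => (s.1, s.2.1)) q')
    (h23 : projPath (fun s => (s.2.1, s.2.2)) q = projPath (fun s => (s.2.1, s.2.2)) q')
    (h13 : projPath (fun s => (s.1, s.2.2)) q = projPath (fun s => (s.1, s.2.2)) q') :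
    q = q' :=
  delannoy3_aux q q' hq.1 hq'.1 h12 h23 h13
end

section
/- Let K be the free Z-module on the set of finite words \lambda in the alphabet {\bullet,\circ}, with basis elements a_\lambda. Define a comultiplication res: K \to K \otimes K by res(a_\lambda) = \sum_{i=0}^n a_{\lambda[1,i]} \otimes a_{\lambda(i,n]} + \sum_{i=1}^n a_{\lambda[1,i)} \otimes a_{\lambda(i,n]}, where n = \ell(\lambda). Then the Z-linear map \delta: K \to Z given by \delta(a_\lambda) = (-1)^{\ell(\lambda)} is a counit for res, i.e., (\delta \otimes id) \circ res = id and (id \otimes \delta) \circ res = id. -/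
/-! Both counit identities telescope: applying `δ ⊗ id` to `res(a_λ)`, the term of the second
sum that deletes the letter `λ_{i+1}` cancels the term of the first sum that splits after it
(the prefixes differ in length by one), leaving only the split `∅ ⊗ λ`; dually, `id ⊗ δ` leaves
only `λ ⊗ ∅`. -/

/-- A weight: a word in the two-letter alphabet `{•, ∘}` (encoded as `Bool`,
with `true = •` and `false = ∘`). -/
abbrev Word : Type := List Bool

/-- The Grothendieck group `K`: the free `ℤ`-module on the set of weights,
with basis `a_λ = Finsupp.single λ 1`. -/
abbrev K : Type := Word →₀ ℤ

/-- The model of `K ⊗ K`: the free `ℤ`-module on pairs of weights, with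
`a_λ ⊗ a_μ = Finsupp.single (λ, μ) 1`. -/
abbrev K2 : Type := Word × Word →₀ ℤ

/-- `res` on a basis element: `res(a_λ) = ∑_{i=0}^n a_{λ[1,i]} ⊗ a_{λ(i,n]}
+ ∑_{i=1}^n a_{λ[1,i)} ⊗ a_{λ(i,n]}` where `n = ℓ(λ)`. -/
noncomputable def resWord (w : Word) : K2 :=
  (∑ i ∈ Finset.range (w.length + 1), Finsupp.single (w.take i, w.drop i) 1)
    + ∑ i ∈ Finset.range w.length, Finsupp.single (w.take i, w.drop (i + 1)) 1

/-- The restriction comultiplication `res : K → K ⊗ K`. -/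
noncomputable def res : K →ₗ[ℤ] K2 :=
  Finsupp.lift K2 ℤ Word resWord

/-- The counit `δ : K → ℤ`, `δ(a_λ) = (-1)^{ℓ(λ)}`. -/
noncomputable def deltaMap : K →ₗ[ℤ] ℤ :=
  Finsupp.lift ℤ ℤ Word fun w => (-1 : ℤ) ^ w.length

/-- `δ ⊗ id : K ⊗ K → K`. -/
noncomputable def deltaLeft : K2 →ₗ[ℤ] K :=
  Finsupp.lift K ℤ (Word × Word) fun p => ((-1 : ℤ) ^ p.1.length) • Finsupp.single p.2 1

/-- `id ⊗ δ : K ⊗ K → K`. -/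
noncomputable def deltaRight : K2 →ₗ[ℤ] K :=
  Finsupp.lift K ℤ (Word × Word) fun p => ((-1 : ℤ) ^ p.2.length) • Finsupp.single p.1 1

open Finset

section Telescoping

variable {M : Type*} [AddCommMonoid M]

theorem sum_range_succ_add_sum_range_eq_first (f g : ℕ → M) (n : ℕ)
    (hfg : ∀ i < n, f (i + 1) + g i = 0) :
    ∑ i ∈ range (n + 1), f i + ∑ i ∈ range n, g i = f 0 := by
  rw [sum_range_succ', add_right_comm, ← sum_add_distrib,
    sum_eq_zero fun i hi => hfg i (mem_range.mp hi), zero_add]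

theorem sum_range_succ_add_sum_range_eq_last (f g : ℕ → M) (n : ℕ)
    (hfg : ∀ i < n, f i + g i = 0) :
    ∑ i ∈ range (n + 1), f i + ∑ i ∈ range n, g i = f n := by
  rw [sum_range_succ, add_right_comm, ← sum_add_distrib,
    sum_eq_zero fun i hi => hfg i (mem_range.mp hi), zero_add]

end Telescoping

theorem neg_one_pow_succ_zsmul_add_self {M : Type*} [AddCommGroup M] (k : ℕ) (x : M) :
    (-1 : ℤ) ^ (k + 1) • x + (-1 : ℤ) ^ k • x = 0 := by
  rw [pow_succ, mul_neg_one, neg_smul, neg_add_cancel]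

@[simp]
theorem res_single (w : Word) : res (Finsupp.single w 1) = resWord w := by
  simp [res]

@[simp]
theorem deltaLeft_single (p : Word × Word) :
    deltaLeft (Finsupp.single p 1) = (-1 : ℤ) ^ p.1.length • Finsupp.single p.2 1 := by
  rw [deltaLeft, Finsupp.lift_apply, Finsupp.sum_single_index (by simp), one_smul]

@[simp]
theorem deltaRight_single (p : Word × Word) :
    deltaRight (Finsupp.single p 1) = (-1 : ℤ) ^ p.2.length • Finsupp.single p.1 1 := by
  rw [deltaRight, Finsupp.lift_apply, Finsupp.sum_single_index (by simp), one_smul]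

theorem deltaLeft_resWord (w : Word) : deltaLeft (resWord w) = Finsupp.single w 1 := by
  simp only [resWord, map_add, map_sum, deltaLeft_single, List.length_take]
  rw [sum_range_succ_add_sum_range_eq_first]
  · simp
  · intro i hi
    rw [min_eq_left hi, min_eq_left hi.le]
    exact neg_one_pow_succ_zsmul_add_self i _

theorem deltaRight_resWord (w : Word) : deltaRight (resWord w) = Finsupp.single w 1 := by
  simp only [resWord, map_add, map_sum, deltaRight_single, List.length_drop]
  rw [sum_range_succ_add_sum_range_eq_last]
  · simp
  · intro i hi
    rw [show w.length - i = w.length - (i + 1) + 1 by omega]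
    exact neg_one_pow_succ_zsmul_add_self _ _

theorem comp_res_eq_id {f : K2 →ₗ[ℤ] K} (hf : ∀ w, f (resWord w) = Finsupp.single w 1) :
    f ∘ₗ res = LinearMap.id :=
  Finsupp.lhom_ext' fun w => LinearMap.ext_ring (by simp [hf])

/-- `δ(a_λ) = (-1)^{ℓ(λ)}` is a counit for `res`:
`(δ ⊗ id) ∘ res = id` and `(id ⊗ δ) ∘ res = id`. -/
theorem delta_is_counit :
    (∀ x : K, deltaLeft (res x) = x) ∧ (∀ x : K, deltaRight (res x) = x) :=
  ⟨LinearMap.congr_fun (comp_res_eq_id deltaLeft_resWord),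
    LinearMap.congr_fun (comp_res_eq_id deltaRight_resWord)⟩
end

section
/- In the Z-bialgebra K (words in {\bullet,\circ}, comultiplication res, counit \delta(a_\lambda) = (-1)^{\ell(\lambda)}, commutative multiplication m given by the ruffle rule), an element x is primitive (res(x) = x \otimes 1 + 1 \otimes x) if and only if x is a Z-linear combination of a_\bullet + 1 and a_\circ + 1. -/
/-- The elementary tensor `x ⊗ y ∈ K ⊗ K` of `x, y ∈ K`. -/
noncomputable def tens (x y : K) : K2 :=
  x.sum fun a ca => y.sum fun b cb => Finsupp.single (a, b) (ca * cb)

/-- The unit `1 = a_∅ ∈ K`. -/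
noncomputable def oneK : K := Finsupp.single ([] : Word) 1

/-!
Comparing coefficients of `a_μ ⊗ a_ν`, primitivity of `x` says
`x(μν) + ∑_b x(μbν) = [ν = ∅] x(μ) + [μ = ∅] x(ν)`. For nonempty `μ` and `ν` the right side
vanishes, so at a longest word of length `≥ 2` in the support of `x` the coefficient would be
minus a sum of coefficients of longer words, hence zero. Thus `x` lives on words of length
at most one, and the case `μ = ν = ∅` gives `x(∅) = x(•) + x(∘)`.
-/

lemma List.take_drop_eq_iff {α : Type*} {w μ ν : List α} {i : ℕ} (hi : i ≤ w.length) :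
    (w.take i, w.drop i) = (μ, ν) ↔ i = μ.length ∧ w = μ ++ ν := by
  constructor
  · rintro ⟨⟩
    simp [hi]
  · rintro ⟨rfl, rfl⟩
    simp

lemma List.take_drop_succ_eq_iff {α : Type*} {w μ ν : List α} {i : ℕ} (hi : i < w.length) :
    (w.take i, w.drop (i + 1)) = (μ, ν) ↔ i = μ.length ∧ ∃ b, w = μ ++ b :: ν := by
  constructor
  · rintro ⟨⟩
    refine ⟨by simp [hi.le], w[i], ?_⟩
    rw [← List.drop_eq_getElem_cons hi, List.take_append_drop]
  · rintro ⟨rfl, b, rfl⟩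
    simp

lemma Finset.sum_ite_eq_and_of_imp_mem {ι M : Type*} [DecidableEq ι] [AddCommMonoid M]
    {s : Finset ι} {a : ι} {P : Prop} [Decidable P] (ha : P → a ∈ s) (m : M) :
    (∑ i ∈ s, if i = a ∧ P then m else 0) = if P then m else 0 := by
  by_cases hP : P <;> simp [hP, ha]

lemma Fintype.ite_exists_eq_sum_ite {α M : Type*} [Fintype α] [AddCommMonoid M]
    (p : α → Prop) [DecidablePred p] [Decidable (∃ b, p b)] (hp : ∀ b c, p b → p c → b = c)
    (m : M) :
    (if ∃ b, p b then m else 0) = ∑ b, if p b then m else 0 := by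
  by_cases h : ∃ b, p b
  · obtain ⟨b, hb⟩ := h
    rw [if_pos ⟨b, hb⟩, Finset.sum_eq_single b
      (fun c _ hcb => if_neg fun hc => hcb (hp c b hc hb)) (by simp), if_pos hb]
  · push Not at h
    simp [h]

lemma tens_apply (x y : K) (μ ν : Word) : tens x y (μ, ν) = x μ * y ν := by
  simp only [tens, Finsupp.sum_apply, Finsupp.single_apply, Prod.mk.injEq, ← ite_zero_mul_ite_zero,
    ← Finsupp.mul_sum, ← Finsupp.sum_mul, Finsupp.sum_ite_self_eq']

lemma oneK_apply (w : Word) : oneK w = if w = [] then 1 else 0 := by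
  simp [oneK, Finsupp.single_apply, eq_comm]

lemma resWord_apply (w μ ν : Word) :
    resWord w (μ, ν) = (if w = μ ++ ν then 1 else 0) + ∑ b, if w = μ ++ b :: ν then 1 else 0 := by
  have splits : (∑ i ∈ Finset.range (w.length + 1),
      if (w.take i, w.drop i) = (μ, ν) then (1 : ℤ) else 0) = if w = μ ++ ν then 1 else 0 := by
    rw [Finset.sum_congr rfl fun i hi =>
      if_congr (List.take_drop_eq_iff (Nat.lt_succ_iff.mp (Finset.mem_range.mp hi))) rfl rfl]
    exact Finset.sum_ite_eq_and_of_imp_mem (by rintro rfl; simp) (1 : ℤ)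
  have deletions : (∑ i ∈ Finset.range w.length,
      if (w.take i, w.drop (i + 1)) = (μ, ν) then (1 : ℤ) else 0)
        = ∑ b, if w = μ ++ b :: ν then 1 else 0 := by
    rw [Finset.sum_congr rfl fun i hi =>
      if_congr (List.take_drop_succ_eq_iff (Finset.mem_range.mp hi)) rfl rfl,
      Finset.sum_ite_eq_and_of_imp_mem (by rintro ⟨b, rfl⟩; simp) (1 : ℤ)]
    refine Fintype.ite_exists_eq_sum_ite (fun b => w = μ ++ b :: ν) (fun b c hb hc => ?_) (1 : ℤ)
    simpa [hb] using hc
  simp only [resWord, Finsupp.add_apply, Finsupp.finsetSum_apply, Finsupp.single_apply, splits,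
    deletions]

lemma res_apply (x : K) (μ ν : Word) :
    res x (μ, ν) = x (μ ++ ν) + ∑ b, x (μ ++ b :: ν) := by
  induction x using Finsupp.induction_linear with
  | zero => simp
  | add x y hx hy => simp only [map_add, Finsupp.add_apply, hx, hy, Finset.sum_add_distrib]; ring
  | single w c =>
    rw [res, Finsupp.lift_apply, Finsupp.sum_single_index (zero_smul ℤ (resWord w)),
      Finsupp.smul_apply, resWord_apply]
    simp only [Fintype.sum_bool, Finsupp.single_apply, eq_comm (a := w), smul_eq_mul, mul_add,
      mul_ite, mul_one, mul_zero]

lemma res_eq_tens_iff (x : K) : res x = tens x oneK + tens oneK x ↔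
    ∀ μ ν, x (μ ++ ν) + ∑ b, x (μ ++ b :: ν) = x μ * oneK ν + oneK μ * x ν := by
  simp only [Finsupp.ext_iff, Prod.forall, Finsupp.add_apply, res_apply, tens_apply]

lemma eq_zero_of_two_le_length {x : K}
    (h : ∀ a b t, x (a :: b :: t) + ∑ c, x (a :: c :: b :: t) = 0) {w : Word}
    (hw : 2 ≤ w.length) : x w = 0 := by
  by_contra hw0
  obtain ⟨v, hv, hmax⟩ := (x.support.filter (2 ≤ ·.length)).exists_max_image List.length
    ⟨w, by simp [hw, hw0]⟩
  simp only [Finset.mem_filter, Finsupp.mem_support_iff] at hv hmax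
  obtain ⟨a, b, t, rfl⟩ : ∃ a b t, v = a :: b :: t := by
    match v, hv.2 with
    | a :: b :: t, _ => exact ⟨a, b, t, rfl⟩
  have hlonger (c : Bool) : x (a :: c :: b :: t) = 0 := by
    by_contra hc
    have := hmax _ ⟨hc, by simp⟩
    simp only [List.length_cons] at this
    omega
  exact hv.1 (by simpa [hlonger] using h a b t)

/-- An element `x ∈ K` is primitive, i.e. `res(x) = x ⊗ 1 + 1 ⊗ x`, if and only if it is a
`ℤ`-linear combination of `a_• + 1` and `a_∘ + 1`. -/
theorem primitive_iff : ∀ x : K,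
    res x = tens x oneK + tens oneK x ↔
      ∃ p q : ℤ, x = p • (Finsupp.single [true] 1 + oneK)
        + q • (Finsupp.single [false] 1 + oneK) := by
  intro x
  rw [res_eq_tens_iff]
  constructor
  · intro h
    have hlong : ∀ w : Word, 2 ≤ w.length → x w = 0 :=
      fun w => eq_zero_of_two_le_length fun a b t => by simpa [oneK_apply] using h [a] (b :: t)
    have hnil : x [true] + x [false] = x [] := by simpa [oneK_apply] using h [] []
    refine ⟨x [true], x [false], Finsupp.ext fun w => ?_⟩
    match w with
    | [] => simp [oneK_apply, ← hnil]
    | [b] => cases b <;> simp [oneK_apply]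
    | a :: b :: t => simp [oneK_apply, hlong (a :: b :: t) (by simp)]
  · rintro ⟨p, q, rfl⟩ μ ν
    rcases μ with _ | ⟨a, μ⟩ <;> rcases ν with _ | ⟨b, ν⟩ <;>
      simp [oneK_apply, Finsupp.single_apply]
end

section
/- Define the ruffle product m' on K by: m'(a_\lambda, a_\mu) = \sum_r \sum_{\nu \in P_r(\lambda,\mu)} a_\nu over all ruffles r, where collisions of equal letters keep that letter and collisions of unequal letters contribute each of \bullet, \circ, and deletion. Then m'(a_{\pi(1)}, a_{\pi(n)}) = (n+1) a_{\pi(n+1)} + n a_{\pi(n)}, where \pi(k) is the word of k letters \bullet. -/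
/-- Prepending a letter to every word, extended linearly to `K`. -/
noncomputable def consK (a : Bool) : K →ₗ[ℤ] K :=
  Finsupp.lmapDomain ℤ ℤ (fun w => a :: w)

/-- The ruffle product `m'(a_λ, a_μ)`, defined by the standard recursion on the first
letter of the result: the first letter comes from `λ` only, from `μ` only, or from a
collision of the first letters of `λ` and `μ`.  A collision of equal letters keeps that
letter; a collision of unequal letters (a neutral collision, the wildcard `?`)
contributes each of `•`, `∘`, and deletion.  This is exactly the sum
`∑_r ∑_{ν ∈ P_r(λ,μ)} a_ν` over all ruffles `r`. -/
noncomputable def ruffle : Word → Word → K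
  | [], μ => Finsupp.single μ 1
  | a :: l, [] => Finsupp.single (a :: l) 1
  | a :: l, b :: μ =>
      consK a (ruffle l (b :: μ)) + consK b (ruffle (a :: l) μ) +
        (if a = b then consK a (ruffle l μ)
         else consK true (ruffle l μ) + consK false (ruffle l μ) + ruffle l μ)
  termination_by l μ => l.length + μ.length
  decreasing_by all_goals simp <;> omega

/-- `π(k)`: the word of `k` letters `•`. -/
def piW (k : ℕ) : Word := List.replicate k true

lemma consK_single (a : Bool) (w : Word) :
    consK a (Finsupp.single w 1) = Finsupp.single (a :: w) 1 := by
  simp [consK, Finsupp.mapDomain_single]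

lemma ruffle_nil_left (μ : Word) : ruffle [] μ = Finsupp.single μ 1 := by
  cases μ <;> rw [ruffle]

lemma ruffle_cons_nil (a : Bool) (l : Word) :
    ruffle (a :: l) [] = Finsupp.single (a :: l) 1 := by
  rw [ruffle]

lemma ruffle_cons_cons_self (a : Bool) (l μ : Word) :
    ruffle (a :: l) (a :: μ) =
      consK a (ruffle l (a :: μ)) + consK a (ruffle (a :: l) μ) + consK a (ruffle l μ) := by
  rw [ruffle, if_pos rfl]

theorem ruffle_singleton_replicate (a : Bool) (n : ℕ) :
    ruffle [a] (List.replicate n a)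
      = (n + 1 : ℤ) • Finsupp.single (List.replicate (n + 1) a) 1
        + (n : ℤ) • Finsupp.single (List.replicate n a) 1 := by
  induction n with
  | zero => simp [ruffle_cons_nil]
  | succ n ih =>
    rw [List.replicate_succ, ruffle_cons_cons_self, ih, ruffle_nil_left, ruffle_nil_left]
    simp only [map_add, map_smul, consK_single, ← List.replicate_succ]
    push_cast
    module

/-- The ruffle product satisfies `m'(a_{π(1)}, a_{π(n)}) = (n+1) a_{π(n+1)} + n a_{π(n)}`. -/
theorem ruffle_pi_one_pi_n (n : ℕ) :
    ruffle (piW 1) (piW n)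
      = (n + 1 : ℤ) • Finsupp.single (piW (n + 1)) 1
        + (n : ℤ) • Finsupp.single (piW n) 1 :=
  ruffle_singleton_replicate true n
end

section
/- Every binomial ring R (a torsion-free commutative ring closed under x \mapsto \binom{x}{n} for all n) admits a unique special \lambda-ring structure with \lambda^n(x) = \binom{x}{n}, and in this structure all Adams operations \psi^k are the identity. -/
/-- The Adams operations `ψ^k` determined by a family of λ-operations via the Newton
formula `ψ^k - λ¹ψ^{k-1} + ⋯ + (-1)^{k-1} λ^{k-1} ψ¹ = (-1)^{k-1} k λ^k`. -/
noncomputable def adams {R : Type*} [CommRing R] (lam : ℕ → R → R) : ℕ → R → R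
  | 0, x => x
  | k + 1, x =>
      (-1 : R) ^ k * ((k + 1 : ℕ) : R) * lam (k + 1) x
        - ∑ i ∈ Finset.range k,
            (-1 : R) ^ (i + 1) * lam (i + 1) x * adams lam (k - i) x
  termination_by k _ => k
  decreasing_by exact Nat.lt_succ_of_le (Nat.sub_le k i)

/-- A special λ-ring structure on a commutative ring `R`.  The first three axioms are the
pre-λ-ring axioms; since every binomial ring is `ℤ`-torsion-free, specialness is recorded
in Wilkerson's equivalent form: the associated Adams operations are natural ring
endomorphisms satisfying `ψ^k ∘ ψ^l = ψ^{kl}` and the Frobenius congruence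
`ψ^p(x) ≡ x^p mod pR` for primes `p`. -/
structure SpecialLambdaStructure (R : Type*) [CommRing R] where
  lam : ℕ → R → R
  lam_zero : ∀ x, lam 0 x = 1
  lam_one : ∀ x, lam 1 x = x
  lam_add : ∀ n x y, lam n (x + y) = ∑ i ∈ Finset.range (n + 1), lam i x * lam (n - i) y
  adams_map_one : ∀ k, 1 ≤ k → adams lam k 1 = 1
  adams_map_mul : ∀ k, 1 ≤ k → ∀ x y, adams lam k (x * y) = adams lam k x * adams lam k y
  adams_map_add : ∀ k, 1 ≤ k → ∀ x y, adams lam k (x + y) = adams lam k x + adams lam k y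
  adams_comp : ∀ k l, 1 ≤ k → 1 ≤ l → ∀ x, adams lam k (adams lam l x) = adams lam (k * l) x
  adams_frobenius : ∀ p : ℕ, p.Prime → ∀ x, ∃ y, adams lam p x - x ^ p = (p : R) * y

/-! The operations `λⁿ = binom(·, n)` satisfy the pre-λ-ring axioms by Vandermonde's identity.
Newton's formula collapses to `ψᵏ = id` because of the alternating-sum identity
`∑_{i<k} (-1)^{i+1} binom(x, i+1) = (-1)^k binom(x-1, k) - 1` together with
`x · binom(x-1, k) = (k+1) binom(x, k+1)`. Identity maps are trivially multiplicative and compose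
correctly, so only the Frobenius congruence `x^p ≡ x mod p` has content: it holds because
`X^p - X - p! binom(X, p)` has coefficients divisible by `p`, `X(X-1)⋯(X-p+1)` being `X^p - X`
over `ZMod p`. -/

open Finset Polynomial

namespace Ring

variable {R : Type*} [CommRing R] [BinomialRing R]

attribute [local instance] BinomialRing.toIsAddTorsionFree

theorem choose_succ_eq_choose_sub_one_add (x : R) (k : ℕ) :
    choose x (k + 1) = choose (x - 1) k + choose (x - 1) (k + 1) := by
  simpa using choose_succ_succ (x - 1) k

theorem sum_range_neg_one_pow_succ_mul_choose_succ (x : R) (k : ℕ) :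
    ∑ i ∈ range k, (-1 : R) ^ (i + 1) * choose x (i + 1) = (-1) ^ k * choose (x - 1) k - 1 := by
  induction k with
  | zero => simp
  | succ k ih =>
    rw [sum_range_succ, ih, choose_succ_eq_choose_sub_one_add]
    ring

theorem mul_choose_sub_one (x : R) (k : ℕ) :
    x * choose (x - 1) k = (k + 1 : ℕ) • choose x (k + 1) := by
  rw [← nsmul_right_inj (Nat.factorial_ne_zero k), smul_smul, Nat.mul_comm k.factorial,
    ← Nat.factorial_succ, ← descPochhammer_eq_factorial_smul_choose, ← mul_smul_comm,
    ← descPochhammer_eq_factorial_smul_choose, descPochhammer_succ_left, smeval_X_mul,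
    smeval_comp, smeval_sub, smeval_X, smeval_one]
  simp

end Ring

theorem descPochhammer_zmod_prime (p : ℕ) [Fact p.Prime] :
    descPochhammer (ZMod p) p = X ^ p - X := by
  have hp : p.Prime := Fact.out
  refine sub_eq_zero.mp <|
    eq_zero_of_natDegree_lt_card_of_eval_eq_zero _ Function.injective_id (fun a => ?_) ?_
  · rw [id, eval_sub, ← ZMod.natCast_zmod_val a,
      descPochhammer_eval_coe_nat_of_lt (ZMod.val_lt a)]
    simp [ZMod.pow_card]
  · rw [ZMod.card]
    exact IsMonicOfDegree.natDegree_sub_lt hp.ne_zero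
      ⟨descPochhammer_natDegree _ p, monic_descPochhammer _ p⟩
      ((isMonicOfDegree_X_pow (ZMod p) p).sub (by simpa using hp.one_lt))

theorem Ring.prime_dvd_pow_sub {R : Type*} [CommRing R] [BinomialRing R] {p : ℕ}
    (hp : p.Prime) (x : R) : (p : R) ∣ x ^ p - x := by
  have : Fact p.Prime := ⟨hp⟩
  obtain ⟨g, hg⟩ : C (p : ℤ) ∣ X ^ p - X - descPochhammer ℤ p := by
    refine (C_dvd_iff_dvd_coeff _ _).mpr fun n => ?_
    rw [← ZMod.intCast_zmod_eq_zero_iff_dvd, ← eq_intCast (Int.castRingHom (ZMod p)),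
      ← coeff_map]
    simp [descPochhammer_map, descPochhammer_zmod_prime]
  have hx := congrArg (smeval · x) hg
  simp only [smeval_sub, smeval_X_pow, smeval_X, pow_one, smeval_C_mul,
    Ring.descPochhammer_eq_factorial_smul_choose, ← Nat.mul_factorial_pred hp.ne_zero,
    mul_smul, nsmul_eq_mul, zsmul_eq_mul, Int.cast_natCast] at hx
  exact ⟨(p - 1).factorial * Ring.choose x p + g.smeval x, by linear_combination hx⟩


section Adams

variable {R : Type*} [CommRing R] [BinomialRing R]

theorem adams_choose_succ (x : R) (k : ℕ) :
    adams (fun n (x : R) => Ring.choose x n) (k + 1) x = x := by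
  induction k using Nat.strong_induction_on with
  | _ k ih =>
    have hterms : ∀ i ∈ range k,
        (-1 : R) ^ (i + 1) * Ring.choose x (i + 1) *
            adams (fun n (x : R) => Ring.choose x n) (k - i) x =
          (-1) ^ (i + 1) * Ring.choose x (i + 1) * x := by
      intro i hi
      obtain ⟨j, hj⟩ : ∃ j, k - i = j + 1 := ⟨k - i - 1, by grind⟩
      rw [hj, ih j (by omega)]
    have hmul := Ring.mul_choose_sub_one x k
    rw [nsmul_eq_mul] at hmul
    rw [adams, sum_congr rfl hterms, ← sum_mul, Ring.sum_range_neg_one_pow_succ_mul_choose_succ]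
    linear_combination (-(-1 : R) ^ k) * hmul

theorem adams_choose {k : ℕ} (hk : 1 ≤ k) (x : R) :
    adams (fun n (x : R) => Ring.choose x n) k x = x := by
  obtain ⟨k, rfl⟩ := Nat.exists_eq_add_of_le' hk
  exact adams_choose_succ x k

end Adams

noncomputable def binomialSpecialLambda (R : Type*) [CommRing R] [BinomialRing R] :
    SpecialLambdaStructure R where
  lam n x := Ring.choose x n
  lam_zero := Ring.choose_zero_right
  lam_one := Ring.choose_one_right
  lam_add n x y := by
    rw [Ring.add_choose_eq n (Commute.all x y), Nat.sum_antidiagonal_eq_sum_range_succ_mk]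
  adams_map_one _ hk := adams_choose hk 1
  adams_map_mul _ hk _ _ := by simp only [adams_choose hk]
  adams_map_add _ hk _ _ := by simp only [adams_choose hk]
  adams_comp _ _ hk hl _ := by
    rw [adams_choose hl, adams_choose hk, adams_choose (Nat.mul_le_mul hk hl)]
  adams_frobenius p hp x := by
    rw [adams_choose hp.one_lt.le]
    exact dvd_sub_comm.mp (Ring.prime_dvd_pow_sub hp x)

theorem SpecialLambdaStructure.ext {R : Type*} [CommRing R] {L M : SpecialLambdaStructure R}
    (h : L.lam = M.lam) : L = M := by
  cases L
  cases M
  cases h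
  rfl

/-- Every binomial ring admits a unique special λ-ring structure with
`λ^n(x) = binom(x, n)` (namely `Ring.choose x n`), and in this structure all Adams
operations `ψ^k` (`k ≥ 1`) are the identity. -/
theorem binomialRing_special_lambda (R : Type*) [CommRing R] [BinomialRing R] :
    (∃! L : SpecialLambdaStructure R, ∀ n (x : R), L.lam n x = Ring.choose x n) ∧
    (∀ k, 1 ≤ k → ∀ x : R, adams (fun n (x : R) => Ring.choose x n) k x = x) :=
  ⟨⟨binomialSpecialLambda R, fun _ _ => rfl,
      fun _ hL => SpecialLambdaStructure.ext (funext₂ hL)⟩,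
    fun _ hk => adams_choose hk⟩
end
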